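/- Let G be a group and S ⊆ F_n a system of equations. If Rad_G(S) := Rad(V(S)) is a fully invariant subgroup of F_n, then there is a family 𝔛 of n-generated subgroups of G such that Rad_G(S) equals the set of all w ∈ F_n that are identities of every K ∈ 𝔛 (i.e., w(k₁,…,kₙ)=1 for all k₁,…,kₙ ∈ K, for every K ∈ 𝔛). -/

import Mathlib

/-- Evaluation of a word of the free group on `n` generators at a tuple `a : Fin n → G`. -/
def wEval {G : Type*} [Group G] {n : ℕ} (a : Fin n → G) : FreeGroup (Fin n) →* G :=
  FreeGroup.lift a

/-- The radical of a subset `E ⊆ G^n`. -/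
def Rad {G : Type*} [Group G] {n : ℕ} (E : Set (Fin n → G)) : Set (FreeGroup (Fin n)) :=
  {w | ∀ a ∈ E, wEval a w = 1}

/-- The algebraic set defined by a system of equations `S ⊆ F_n`. -/
def Vset (G : Type*) [Group G] {n : ℕ} (S : Set (FreeGroup (Fin n))) : Set (Fin n → G) :=
  {a | ∀ w ∈ S, wEval a w = 1}

/-- The "cube" `K^n` of a subgroup `K ≤ G`: tuples with all entries in `K`. -/
def cube {G : Type*} [Group G] (n : ℕ) (K : Subgroup G) : Set (Fin n → G) :=
  {a | ∀ i, a i ∈ K}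

/-- A set of words is fully invariant if it is stable under every endomorphism of `F_n`. -/
def FullyInvariant {n : ℕ} (H : Set (FreeGroup (Fin n))) : Prop :=
  ∀ α : FreeGroup (Fin n) →* FreeGroup (Fin n), ∀ w ∈ H, α w ∈ H

/-- A subgroup is `n`-generated if it is the closure of at most `n` elements. -/
def NGenerated {G : Type*} [Group G] (n : ℕ) (K : Subgroup G) : Prop :=
  ∃ s : Finset G, s.card ≤ n ∧ K = Subgroup.closure (s : Set G)

/-! A word `w` vanishing on `V(S)` vanishes on the whole cube `⟨a⟩ⁿ` of each solution `a`: every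
tuple `b` of elements of `⟨a₁, …, aₙ⟩` is `b = (u₁(a), …, uₙ(a))` for some words `uᵢ`, so
`w(b) = α(w)(a)` for the substitution `α : xᵢ ↦ uᵢ`, and `α(w)` lies in the radical again by full
invariance. Hence the subgroups `⟨a₁, …, aₙ⟩`, `a ∈ V(S)`, form the required family. -/

open Set

section

variable {G : Type*} [Group G] {m n : ℕ}

theorem wEval_lift (a : Fin m → G) (u : Fin n → FreeGroup (Fin m)) (w : FreeGroup (Fin n)) :
    wEval (fun i => wEval a (u i)) w = wEval a (FreeGroup.lift u w) :=
  (FreeGroup.lift_unique ((wEval a).comp (FreeGroup.lift u)) fun _ => by simp).symm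

theorem exists_wEval_eq_of_forall_mem_closure {a : Fin m → G} {b : Fin n → G}
    (hb : ∀ i, b i ∈ Subgroup.closure (range a)) :
    ∃ u : Fin n → FreeGroup (Fin m), ∀ i, wEval a (u i) = b i := by
  rw [← FreeGroup.range_lift_eq_closure] at hb
  exact ⟨fun i => (hb i).choose, fun i => (hb i).choose_spec⟩

theorem wEval_eq_one_of_mem_rad {E : Set (Fin n → G)} (hE : FullyInvariant (Rad E))
    {w : FreeGroup (Fin n)} (hw : w ∈ Rad E) {a b : Fin n → G} (ha : a ∈ E)
    (hb : ∀ i, b i ∈ Subgroup.closure (range a)) : wEval b w = 1 := by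
  obtain ⟨u, hu⟩ := exists_wEval_eq_of_forall_mem_closure hb
  obtain rfl : (fun i => wEval a (u i)) = b := funext hu
  rw [wEval_lift]
  exact hE (FreeGroup.lift u) w hw a ha

theorem nGenerated_closure_range (a : Fin n → G) : NGenerated n (Subgroup.closure (range a)) := by
  classical
  refine ⟨Finset.univ.image a, Finset.card_image_le.trans (Finset.card_fin n).le, ?_⟩
  rw [Finset.coe_image, Finset.coe_univ, image_univ]

end

theorem rad_eq_identities_of_family {G : Type*} [Group G] {n : ℕ}
    (S : Set (FreeGroup (Fin n))) (hfi : FullyInvariant (Rad (Vset G S))) :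
    ∃ 𝔛 : Set (Subgroup G), (∀ K ∈ 𝔛, NGenerated n K) ∧
      Rad (Vset G S) = {w : FreeGroup (Fin n) |
        ∀ K ∈ 𝔛, ∀ a : Fin n → G, (∀ i, a i ∈ K) → wEval a w = 1} := by
  refine ⟨(fun a => Subgroup.closure (range a)) '' Vset G S, ?_, ?_⟩
  · rintro _ ⟨a, -, rfl⟩
    exact nGenerated_closure_range a
  · ext w
    refine ⟨fun hw => ?_, fun hw a ha => ?_⟩
    · rintro _ ⟨a, ha, rfl⟩ b hb
      exact wEval_eq_one_of_mem_rad hfi hw ha hb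
    · exact hw _ ⟨a, ha, rfl⟩ a fun i => Subgroup.subset_closure ⟨i, rfl⟩
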